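/- arXiv:1605.03569 — 4 statements merged into one kernel-verified Lean document; each statement's English description precedes it below -/
import Mathlib

section
/- Let T be a rooted tree and (T,c,p) a security system. Suppose (u,v) is an edge of T with p(u) ≥ p(v), and let p' be obtained from p by swapping the prizes of u and v. Then for every budget B, the maximum prize an attacker can obtain under (T,c,p') is at most that under (T,c,p). -/
open Classical in
/-- `maxp n par c p B`: the maximum total prize of a system attack (a rooted
subtree, encoded as a parent-closed set `A` of non-root vertices of the rooted
tree on `Fin (n+1)` with root `0` and parent function `par`; the edge with head
`v` has cost `c v` and the vertex `v` has prize `p v`) whose total edge-cost is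
at most the budget `B`. -/
noncomputable def maxp (n : ℕ) (par : Fin (n+1) → Fin (n+1))
    (c p : Fin (n+1) → ℚ) (B : ℚ) : ℚ :=
  ((((Finset.univ.filter (fun v : Fin (n+1) => v ≠ 0)).powerset).filter
      (fun A => (∀ v ∈ A, par v = 0 ∨ par v ∈ A) ∧ ∑ v ∈ A, c v ≤ B)).image
    (fun A => ∑ v ∈ A, p v)).max.unbotD 0

/-- The multiset of values of `f` over the non-root vertices. -/
def valsNR (n : ℕ) (f : Fin (n+1) → ℚ) : Multiset ℚ :=
  (Finset.univ.filter (fun v : Fin (n+1) => v ≠ 0)).val.map f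

/-!
An attack containing `v` also contains its parent `u`, so it either contains both endpoints of
the edge, and then its prize is unchanged by the swap, or only `u`, and then its prize drops by
`p u - p v`, or neither. Hence every attack gains nothing from the swap, and neither does the
best one.
-/

namespace Finset

variable {ι α : Type*}

theorem max_image_unbotD_le_of_forall_le [LinearOrder α] {s : Finset ι} {f g : ι → α}
    (d : α) (hfg : ∀ i ∈ s, f i ≤ g i) :
    (s.image f).max.unbotD d ≤ (s.image g).max.unbotD d := by
  rcases s.eq_empty_or_nonempty with rfl | hs
  · simp
  rw [← coe_max' (hs.image f), ← coe_max' (hs.image g), WithBot.unbotD_coe, WithBot.unbotD_coe]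
  refine max'_le _ _ _ fun y hy => ?_
  obtain ⟨i, hi, rfl⟩ := mem_image.mp hy
  exact (hfg i hi).trans (le_max' _ _ (mem_image_of_mem g hi))

theorem sum_comp_swap_le [DecidableEq ι] [AddCommMonoid α] [PartialOrder α]
    [IsOrderedAddMonoid α] {s : Finset ι} {f : ι → α} {u v : ι}
    (hvu : v ∈ s → u ∈ s) (hf : f v ≤ f u) :
    ∑ w ∈ s, f (Equiv.swap u v w) ≤ ∑ w ∈ s, f w := by
  have swap_eq_of_notMem {w : ι} (hw : w ∈ s) (hv : v ∉ s) : Equiv.swap u v w = w ∨ w = u := by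
    by_cases hwu : w = u
    · exact .inr hwu
    · exact .inl (Equiv.swap_apply_of_ne_of_ne hwu (ne_of_mem_of_not_mem hw hv))
  by_cases hv : v ∈ s
  · refine (Equiv.Perm.sum_comp _ s f fun w hw => ?_).le
    rcases Equiv.eq_or_eq_of_swap_apply_ne_self hw with rfl | rfl
    exacts [hvu hv, hv]
  by_cases hu : u ∈ s
  · rw [← sum_erase_add s _ hu, ← sum_erase_add s f hu, Equiv.swap_apply_left]
    refine add_le_add (sum_congr rfl fun w hw => ?_).le hf
    have ⟨hwu, hw⟩ := mem_erase.mp hw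
    exact congrArg f ((swap_eq_of_notMem hw hv).resolve_right hwu)
  · refine (sum_congr rfl fun w hw => ?_).le
    exact congrArg f ((swap_eq_of_notMem hw hv).resolve_right (ne_of_mem_of_not_mem hw hu))

end Finset

theorem stmt0_general (n : ℕ) (par : Fin (n+1) → Fin (n+1))
    (c p : Fin (n+1) → ℚ)
    (u v : Fin (n+1)) (hu : u ≠ 0) (hedge : par v = u)
    (hpuv : p v ≤ p u)
    (B : ℚ) :
    maxp n par c (p ∘ Equiv.swap u v) B ≤ maxp n par c p B := by
  refine Finset.max_image_unbotD_le_of_forall_le 0 fun A hA => ?_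
  have hclosed := (Finset.mem_filter.mp hA).2.1
  refine Finset.sum_comp_swap_le (fun hv => ?_) hpuv
  rw [← hedge]
  exact (hclosed v hv).resolve_left (hedge ▸ hu)

/-- Swapping the prizes of the endpoints of an edge `(u,v)` with `p u ≥ p v`
never increases the attacker's maximum prize, for any budget. -/
theorem stmt0 (n : ℕ) (par : Fin (n+1) → Fin (n+1))
    (hpar : ∀ v : Fin (n+1), v ≠ 0 → (par v).val < v.val)
    (c p : Fin (n+1) → ℚ) (hc : ∀ v, 0 ≤ c v) (hp : ∀ v, 0 ≤ p v)
    (u v : Fin (n+1)) (hu : u ≠ 0) (hv : v ≠ 0) (hedge : par v = u)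
    (hpuv : p v ≤ p u)
    (B : ℚ) (hB : 0 ≤ B) :
    maxp n par c (p ∘ Equiv.swap u v) B ≤ maxp n par c p B :=
  stmt0_general n par c p u v hu hedge hpuv B
end

section
/- Let T be a rooted tree and (T,c,p) a security system. Suppose (u,v) and (v,w) are incident edges of T with c((u,v)) ≤ c((v,w)), and let c' be obtained from c by swapping the costs of these two edges. Then for every budget B, the maximum prize an attacker can obtain under (T,c',p) is at most that under (T,c,p). -/
open Finset

/-! An attack that contains the edge `(v,w)` is a rooted subtree, so it also contains `(u,v)`.
Hence it either pays for both edges, and the swap leaves its cost unchanged, or only for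
`(u,v)`, whose cost rises from `c (u,v)` to `c (v,w)`. Every attack thus costs at least as much
under the swapped costs, and whatever is affordable after the swap was affordable before. -/

theorem Finset.max_unbotD_mono {α : Type*} [LinearOrder α] {s t : Finset α} (hs : s.Nonempty)
    (hst : s ⊆ t) (d : α) : s.max.unbotD d ≤ t.max.unbotD d :=
  WithBot.unbotD_mono (max_eq_bot.not.mpr hs.ne_empty) (max_mono hst)

theorem Finset.sum_le_sum_comp_swap {α M : Type*} [DecidableEq α] [AddCommMonoid M] [PartialOrder M]
    [IsOrderedAddMonoid M] {c : α → M} {v w : α} (hcvw : c v ≤ c w) {A : Finset α}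
    (hwv : w ∈ A → v ∈ A) : ∑ x ∈ A, c x ≤ ∑ x ∈ A, c (Equiv.swap v w x) := by
  by_cases hwA : w ∈ A
  · refine (Equiv.Perm.sum_comp (Equiv.swap v w) A c fun x hx => ?_).ge
    rcases (Equiv.swap_apply_ne_self_iff.mp hx).2 with rfl | rfl
    exacts [hwv hwA, hwA]
  · refine sum_le_sum fun x hx => ?_
    have hxw : x ≠ w := ne_of_mem_of_not_mem hx hwA
    rcases eq_or_ne x v with rfl | hxv
    · simpa using hcvw
    · rw [Equiv.swap_apply_of_ne_of_ne hxv hxw]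

theorem stmt1_general (n : ℕ) (par : Fin (n+1) → Fin (n+1))
    (c p : Fin (n+1) → ℚ)
    (v w : Fin (n+1)) (hv : v ≠ 0) (hedge : par w = v)
    (hcvw : c v ≤ c w)
    (B : ℚ) (hB : 0 ≤ B) :
    maxp n par (c ∘ Equiv.swap v w) p B ≤ maxp n par c p B := by
  classical
  refine max_unbotD_mono ⟨0, mem_image.mpr ⟨∅, by simp [hB], sum_empty⟩⟩
    (image_subset_image (monotone_filter_right _ ?_)) 0
  rintro A - ⟨hclosed, hcost⟩
  have hwv : w ∈ A → v ∈ A := fun hwA =>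
    hedge ▸ (hclosed w hwA).resolve_left (hedge ▸ hv)
  exact ⟨hclosed, (sum_le_sum_comp_swap hcvw hwv).trans hcost⟩

/-- Swapping the costs of incident edges `(u,v)`, `(v,w)` with
`c (u,v) ≤ c (v,w)` never increases the attacker's maximum prize. -/
theorem stmt1 (n : ℕ) (par : Fin (n+1) → Fin (n+1))
    (hpar : ∀ x : Fin (n+1), x ≠ 0 → (par x).val < x.val)
    (c p : Fin (n+1) → ℚ) (hc : ∀ x, 0 ≤ c x) (hp : ∀ x, 0 ≤ p x)
    (v w : Fin (n+1)) (hv : v ≠ 0) (hw : w ≠ 0) (hedge : par w = v)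
    (hcvw : c v ≤ c w)
    (B : ℚ) (hB : 0 ≤ B) :
    maxp n par (c ∘ Equiv.swap v w) p B ≤ maxp n par c p B :=
  stmt1_general n par c p v w hv hedge hcvw B hB
end

section
/- Let T be a star rooted at its center with n leaves and M = (T,C,P) a cyber-security model. The security system that assigns the prizes to the leaves in increasing order matched with the costs assigned to the corresponding edges in increasing order (smallest prize with smallest cost, etc.) is optimal: for every budget B it minimizes the attacker's maximum prize over all security systems for M. -/
/-!
Relabelling the leaves carries attacks to attacks. Exchanging the prizes of two leaves `u`, `v`
with `c u ≤ c v` and `q v ≤ q u`, so that prizes and costs become co-monotone on `{u, v}`, never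
helps the attacker: an attack through `v` but not `u` can use `u` instead, at no greater cost and
for the same prize. Up to relabelling, any security system is the co-monotone one with its prizes
permuted, and such a permutation is undone by exchanges of this kind (placing the largest prize
first), so every attack on the co-monotone system is matched, within the same budget, by one on
any other system.
-/

open Finset Equiv

theorem Fintype.exists_perm_eq_comp_of_map_univ_eq {α β : Type*} [Fintype α] {f g : α → β}
    (h : univ.val.map f = univ.val.map g) : ∃ σ : Perm α, g = f ∘ σ := by
  classical
  have hcard : ∀ y, Fintype.card {x // g x = y} = Fintype.card {x // f x = y} := by
    intro y
    simpa [Multiset.count_map, Fintype.card_subtype, eq_comm, card_def] using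
      congrArg (Multiset.count y) h
  exact ⟨ofFiberEquiv fun y => Fintype.equivOfCardEq (hcard y),
    funext fun x => (ofFiberEquiv_map _ x).symm⟩

section AttacksDominated

variable {ι : Type*}

def AttacksDominated (c p c' p' : ι → ℚ) (B : ℚ) : Prop :=
  ∀ A : Finset ι, ∑ i ∈ A, c i ≤ B →
    ∃ A' : Finset ι, ∑ i ∈ A', c' i ≤ B ∧ ∑ i ∈ A, p i ≤ ∑ i ∈ A', p' i

variable {c p c' p' c'' p'' : ι → ℚ} {B : ℚ}

theorem AttacksDominated.trans (h : AttacksDominated c p c' p' B)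
    (h' : AttacksDominated c' p' c'' p'' B) : AttacksDominated c p c'' p'' B := by
  intro A hA
  obtain ⟨A', hA', hle⟩ := h A hA
  obtain ⟨A'', hA'', hle'⟩ := h' A' hA'
  exact ⟨A'', hA'', hle.trans hle'⟩

theorem attacksDominated_comp_perm (σ : Perm ι) : AttacksDominated c p (c ∘ σ) (p ∘ σ) B := by
  intro A hA
  refine ⟨A.map σ.symm.toEmbedding, ?_, ?_⟩ <;> simp [sum_map, hA]

theorem apply_swap_le_of_ne [DecidableEq ι] {f : ι → ℚ} {u v w : ι} (h : f u ≤ f v) (hw : w ≠ u) :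
    f (swap u v w) ≤ f w := by
  rcases eq_or_ne w v with rfl | hwv
  · simpa using h
  · rw [swap_apply_of_ne_of_ne hw hwv]

theorem attacksDominated_comp_swap [DecidableEq ι] {q : ι → ℚ} {u v : ι} (hc : c u ≤ c v)
    (hq : q v ≤ q u) : AttacksDominated c (q ∘ swap u v) c q B := by
  intro A hA
  by_cases hvA : v ∈ A
  · by_cases huA : u ∈ A
    · refine ⟨A, hA, (sum_equiv (swap u v) (fun w => ?_) fun _ _ => rfl).le⟩
      rcases eq_or_ne w u with rfl | hwu
      · simp [huA, hvA]
      rcases eq_or_ne w v with rfl | hwv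
      · simp [huA, hvA]
      · rw [swap_apply_of_ne_of_ne hwu hwv]
    · refine ⟨A.map (swap u v).toEmbedding, ?_, ?_⟩
      · rw [sum_map]
        refine (sum_le_sum fun w hw => apply_swap_le_of_ne hc ?_).trans hA
        rintro rfl
        exact huA hw
      · simp [sum_map]
  · refine ⟨A, hA, sum_le_sum fun w hw => ?_⟩
    rw [Function.comp_apply, swap_comm]
    refine apply_swap_le_of_ne hq ?_
    rintro rfl
    exact hvA hw

/- Induction on a finset containing the support of `π`, removing its largest element `a`:
`π * swap (π⁻¹ a) a` fixes `a`, and the transposition it differs from `π` by is an exchange of the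
kind in `attacksDominated_comp_swap`, because `π⁻¹ a ≤ a` and `π a ≤ a`. -/
theorem attacksDominated_comp_perm_of_monotone [Fintype ι] [LinearOrder ι] (hc : Monotone c)
    (hp : Monotone p) (π : Perm ι) : AttacksDominated c p c (p ∘ π) B := by
  classical
  obtain ⟨s, hs⟩ : ∃ s : Finset ι, ∀ x, π x ≠ x → x ∈ s := ⟨π.support, fun x => π.mem_support.2⟩
  induction s using Finset.induction_on_max generalizing π with
  | empty =>
    obtain rfl : π = 1 := Perm.ext fun x => by_contra fun hx => by simpa using hs x hx
    exact fun A hA => ⟨A, hA, le_rfl⟩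
  | insert a s hlt ih =>
    have mem_s : ∀ x, π x ≠ x → x ≠ a → x ∈ s := fun x hx hxa =>
      (mem_insert.1 (hs x hx)).resolve_left hxa
    set b := π.symm a
    have hb : π b = a := π.apply_symm_apply a
    have hba : b ≤ a := by
      rcases eq_or_ne b a with h | h
      · exact h.le
      · exact (hlt b (mem_s b (by rw [hb]; exact h.symm) h)).le
    have hπa : π a ≤ a := by
      rcases eq_or_ne (π a) a with h | h
      · exact h.le
      · exact (hlt _ (mem_s _ (π.injective.ne h) h)).le
    have hτ : ∀ x, (π * swap b a) x ≠ x → x ∈ s := by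
      intro x hx
      have hxa : x ≠ a := by
        rintro rfl
        simp [hb] at hx
      refine mem_s x (fun hπx => hx ?_) hxa
      have hxb : x ≠ b := by
        rintro rfl
        exact hxa (hπx.symm.trans hb)
      simp [swap_apply_of_ne_of_ne hxb hxa, hπx]
    refine (ih (π * swap b a) hτ).trans ?_
    have hswap := attacksDominated_comp_swap (c := c) (B := B) (q := p ∘ π) (hc hba)
      (by simpa [hb] using hp hπa)
    simpa [Function.comp_def] using hswap

theorem attacksDominated_of_monotone [Fintype ι] [LinearOrder ι] (hc : Monotone c)
    (hp : Monotone p) (hc' : univ.val.map c' = univ.val.map c)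
    (hp' : univ.val.map p' = univ.val.map p) : AttacksDominated c p c' p' B := by
  obtain ⟨σ, rfl⟩ := Fintype.exists_perm_eq_comp_of_map_univ_eq hc'.symm
  obtain ⟨τ, rfl⟩ := Fintype.exists_perm_eq_comp_of_map_univ_eq hp'.symm
  have := (attacksDominated_comp_perm_of_monotone hc hp (τ * σ⁻¹)).trans
    (attacksDominated_comp_perm (B := B) σ)
  simpa [Function.comp_def] using this

end AttacksDominated

abbrev StarLeaf (n : ℕ) := {v : Fin (n + 1) // v ≠ 0}

section StarMaxp

variable {n : ℕ} {c p c' p' : Fin (n + 1) → ℚ} {B : ℚ}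

theorem valsNR_eq_map_univ (f : Fin (n + 1) → ℚ) :
    valsNR n f = univ.val.map fun v : StarLeaf n => f v := by
  rw [valsNR, ← subtype_map, subtype_univ, map_val, Multiset.map_map]
  rfl

theorem le_maxp (A : Finset (StarLeaf n)) (hA : ∑ v ∈ A, c v ≤ B) :
    ∑ v ∈ A, p v ≤ maxp n (fun _ => 0) c p B := by
  refine WithBot.le_unbotD <| le_max <|
    mem_image.2 ⟨A.map (Function.Embedding.subtype _), ?_, sum_map ..⟩
  rw [mem_filter, mem_powerset, sum_map]
  refine ⟨fun v hv => ?_, fun _ _ => Or.inl rfl, hA⟩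
  obtain ⟨w, -, rfl⟩ := mem_map.1 hv
  simpa using w.2

theorem maxp_le {x : ℚ} (hx : 0 ≤ x)
    (h : ∀ A : Finset (StarLeaf n), ∑ v ∈ A, c v ≤ B → ∑ v ∈ A, p v ≤ x) :
    maxp n (fun _ => 0) c p B ≤ x := by
  refine (WithBot.unbotD_le_iff fun _ => hx).2 (Finset.max_le fun y hy => ?_)
  obtain ⟨A, hA, rfl⟩ := mem_image.1 hy
  obtain ⟨hA0, hcost⟩ : (∀ v ∈ A, v ≠ 0) ∧ ∑ v ∈ A, c v ≤ B := by
    simpa [subset_iff] using hA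
  have hsum := h (A.subtype (· ≠ 0)) (by rwa [sum_subtype_of_mem _ hA0])
  rw [sum_subtype_of_mem _ hA0] at hsum
  exact WithBot.coe_le_coe.2 hsum

theorem maxp_nonneg (hB : 0 ≤ B) : 0 ≤ maxp n (fun _ => 0) c p B := by
  simpa using le_maxp (p := p) ∅ (by simpa using hB)

theorem maxp_le_maxp_of_attacksDominated (hB : 0 ≤ B)
    (h : AttacksDominated (fun v : StarLeaf n => c v) (fun v => p v) (fun v => c' v)
      (fun v => p' v) B) :
    maxp n (fun _ => 0) c p B ≤ maxp n (fun _ => 0) c' p' B :=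
  maxp_le (maxp_nonneg hB) fun A hA =>
    let ⟨A', hA', hle⟩ := h A hA
    hle.trans (le_maxp A' hA')

end StarMaxp

theorem stmt8_general (n : ℕ) (c p : Fin (n+1) → ℚ)
    (hcinc : ∀ v w : Fin (n+1), v ≠ 0 → v ≤ w → c v ≤ c w)
    (hpinc : ∀ v w : Fin (n+1), v ≠ 0 → v ≤ w → p v ≤ p w) :
    ∀ B : ℚ, 0 ≤ B → ∀ c' p' : Fin (n+1) → ℚ,
      valsNR n c' = valsNR n c → valsNR n p' = valsNR n p →
      maxp n (fun _ => 0) c p B ≤ maxp n (fun _ => 0) c' p' B := by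
  intro B hB c' p' hc' hp'
  rw [valsNR_eq_map_univ, valsNR_eq_map_univ] at hc' hp'
  exact maxp_le_maxp_of_attacksDominated hB <| attacksDominated_of_monotone
    (fun v w hvw => hcinc v w v.2 hvw) (fun v w hvw => hpinc v w v.2 hvw) hc' hp'

/-- On a star rooted at its center, assigning the prizes in increasing order
matched with the costs in increasing order is an optimal security system. -/
theorem stmt8 (n : ℕ) (c p : Fin (n+1) → ℚ)
    (hc : ∀ v, 0 ≤ c v) (hp : ∀ v, 0 ≤ p v)
    (hcinc : ∀ v w : Fin (n+1), v ≠ 0 → v ≤ w → c v ≤ c w)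
    (hpinc : ∀ v w : Fin (n+1), v ≠ 0 → v ≤ w → p v ≤ p w) :
    ∀ B : ℚ, 0 ≤ B → ∀ c' p' : Fin (n+1) → ℚ,
      valsNR n c' = valsNR n c → valsNR n p' = valsNR n p →
      maxp n (fun _ => 0) c p B ≤ maxp n (fun _ => 0) c' p' B :=
  stmt8_general n c p hcinc hpinc
end

section
/- Let T be a rooted 4-spider: root r with children u₁,…,u_k, where each uᵢ for i ∈ {1,…,n−k} has exactly one child u_{k+i} (and n/2 ≤ k ≤ n−2). Let P = {p₁ ≤ ⋯ ≤ pₙ}. Then in the P-model (T, I, P), the security system with p(uᵢ) = pᵢ for i ∈ {1,…,k} and p(uᵢ) = p_{n+k+1−i} for i ∈ {k+1,…,n} (smallest prizes on level one in increasing order, largest prizes on the leaves in decreasing order so the largest leaf-prize hangs below the smallest level-one prize) is optimal: for every integer budget m and every bijective prize assignment p', maxp(m,𝟙,p) ≤ maxp(m,𝟙,p'). -/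
/-- Parent function of the rooted 4-spider: the root `0` has children
`u₁, …, uₖ`, and `u_{k+i}` is the unique child of `uᵢ` for `i ∈ {1,…,n-k}`. -/
def spiderPar (n k : ℕ) : Fin (n+1) → Fin (n+1) :=
  fun v => if h : v.val ≤ k then 0 else ⟨v.val - k, by have := v.isLt; omega⟩

/-- The prize assignment on the rooted 4-spider built from the increasingly
sorted prizes `pr`: `p uᵢ = prᵢ` for `i ≤ k` and `p uᵢ = pr_{n+k+1-i}` for
`i ∈ {k+1,…,n}`. -/
def spiderPrize (n k : ℕ) (pr : Fin (n+1) → ℚ) : Fin (n+1) → ℚ :=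
  fun v => if h : v.val ≤ k then pr v
    else pr ⟨n + k + 1 - v.val, by have := v.isLt; omega⟩
/-!
Rank the non-root vertices by the position of their prize in the canonical assignment
(level one `u₁, …, u_k` first, then the leaves from `uₙ` back to `u_{k+1}`) and give an
assignment the potential `∑ rank v * p v`. An assignment carrying the same prizes that is not
sorted along this ranking has an inversion; undoing it, by exchanging two vertices or two whole
branches `uᵢ u_{k+i}`, strictly raises the potential and does not raise the best attack value,
since every attack on the new assignment is matched by an attack of at most the same size on the
old one. The potential takes finitely many values, so this ends at the canonical assignment.
-/

namespace PModel

open Finset Equiv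

theorem forall_of_exists_lt_imp {α β : Type*} [LinearOrder β] {s : Set α} {f : α → β}
    (hf : (f '' s).Finite) {Q : α → Prop}
    (h : ∀ a ∈ s, ¬ Q a → ∃ b ∈ s, f a < f b ∧ (Q b → Q a)) : ∀ a ∈ s, Q a := by
  by_contra! hbad
  obtain ⟨a, has, haQ⟩ := hbad
  set t := {a ∈ s | ¬ Q a}
  obtain ⟨_, ⟨a₀, ⟨ha₀s, ha₀Q⟩, rfl⟩, hmax⟩ := Set.exists_max_image (f '' t) id
    (hf.subset (Set.image_mono (Set.sep_subset _ _))) ⟨f a, a, ⟨has, haQ⟩, rfl⟩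
  obtain ⟨b, hbs, hlt, himp⟩ := h a₀ ha₀s ha₀Q
  have hbQ : Q b := by
    by_contra hbQ
    exact (hmax _ ⟨b, ⟨hbs, hbQ⟩, rfl⟩).not_gt hlt
  exact ha₀Q (himp hbQ)

theorem eqOn_of_map_val_eq {ι β γ : Type*} [DecidableEq ι] [LinearOrder β] [LinearOrder γ]
    (r : ι → β) {f g : ι → γ} (s : Finset ι) (hr : Set.InjOn r s)
    (hfg : s.val.map f = s.val.map g)
    (hf : ∀ x ∈ s, ∀ y ∈ s, r x < r y → f x ≤ f y)
    (hg : ∀ x ∈ s, ∀ y ∈ s, r x < r y → g x ≤ g y) : Set.EqOn f g s := by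
  induction s using Finset.induction_on_max_value r with
  | empty => simp
  | insert a s ha hmax ih =>
    simp only [coe_insert, Set.injOn_insert ha, mem_insert, forall_eq_or_imp] at *
    have hlt : ∀ x ∈ s, r x < r a := fun x hx =>
      (hmax x hx).lt_of_ne fun h => hr.2 ⟨x, hx, h⟩
    rw [insert_val_of_notMem ha, Multiset.map_cons, Multiset.map_cons] at hfg
    have hmax_of {h₁ h₂ : ι → γ} (hmono : ∀ x ∈ s, r x < r a → h₁ x ≤ h₁ a)
        (hmap : h₂ a ::ₘ s.val.map h₂ = h₁ a ::ₘ s.val.map h₁) : h₂ a ≤ h₁ a := by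
      have hmem : h₂ a ∈ h₁ a ::ₘ s.val.map h₁ := hmap ▸ Multiset.mem_cons_self _ _
      rcases Multiset.mem_cons.1 hmem with h | h
      · exact h.le
      · obtain ⟨x, hx, hx'⟩ := Multiset.mem_map.1 h
        exact hx' ▸ hmono x hx (hlt x hx)
    have hfa : f a = g a := le_antisymm (hmax_of (fun x hx => (hg.2 x hx).1) hfg)
      (hmax_of (fun x hx => (hf.2 x hx).1) hfg.symm)
    rw [hfa, Multiset.cons_inj_right] at hfg
    have hs := ih hr.1 hfg (fun x hx => (hf.2 x hx).2) (fun x hx => (hg.2 x hx).2)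
    rintro x (rfl | hx)
    exacts [hfa, hs hx]

section SwapSums

variable {α M : Type*} [DecidableEq α] [AddCommGroup M] {s : Finset α} {x y : α}

theorem sum_comp_swap_of_mem_of_mem (f : α → M) (hx : x ∈ s) (hy : y ∈ s) :
    ∑ v ∈ s, f (swap x y v) = ∑ v ∈ s, f v :=
  Perm.sum_comp _ s f fun v hv => by
    rcases (swap_apply_ne_self_iff.1 hv).2 with rfl | rfl <;> assumption

theorem sum_comp_swap_of_notMem_of_notMem (f : α → M) (hx : x ∉ s) (hy : y ∉ s) :
    ∑ v ∈ s, f (swap x y v) = ∑ v ∈ s, f v :=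
  sum_congr rfl fun v hv => by
    rw [swap_apply_of_ne_of_ne (ne_of_mem_of_not_mem hv hx) (ne_of_mem_of_not_mem hv hy)]

theorem sum_comp_swap_of_mem_of_notMem (f : α → M) (hx : x ∈ s) (hy : y ∉ s) :
    ∑ v ∈ s, f (swap x y v) = ∑ v ∈ s, f v - f x + f y := by
  rw [← add_sum_erase s _ hx, ← add_sum_erase s f hx, swap_apply_left,
    sum_comp_swap_of_notMem_of_notMem f (notMem_erase x s) fun h => hy (mem_of_mem_erase h)]
  abel

theorem sum_mul_comp_swap {R : Type*} [CommRing R] (w q : α → R) (hx : x ∈ s) (hy : y ∈ s)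
    (hxy : x ≠ y) :
    ∑ v ∈ s, w v * q (swap x y v) = ∑ v ∈ s, w v * q v + (w x - w y) * (q y - q x) := by
  have hdiff : ∑ v ∈ s, (w v * q (swap x y v) - w v * q v) = (w x - w y) * (q y - q x) := by
    rw [← sum_subset (insert_subset_iff.2 ⟨hx, singleton_subset_iff.2 hy⟩), sum_pair hxy,
      swap_apply_left, swap_apply_right]
    · ring
    · intro v _ hv
      simp only [mem_insert, mem_singleton, not_or] at hv
      rw [swap_apply_of_ne_of_ne hv.1 hv.2, sub_self]
  rw [← hdiff, sum_sub_distrib]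
  abel

end SwapSums

section Tree

variable {n : ℕ} {par : Fin (n+1) → Fin (n+1)}

def IsAttack (par : Fin (n+1) → Fin (n+1)) (A : Finset (Fin (n+1))) : Prop :=
  0 ∉ A ∧ ∀ v ∈ A, par v = 0 ∨ par v ∈ A

theorem mem_maxp_attacks_iff {B : ℚ} {A : Finset (Fin (n+1))} :
    A ∈ (((univ.filter (fun v : Fin (n+1) => v ≠ 0)).powerset).filter
      (fun A => (∀ v ∈ A, par v = 0 ∨ par v ∈ A) ∧ ∑ _ ∈ A, (1 : ℚ) ≤ B)) ↔
      IsAttack par A ∧ (#A : ℚ) ≤ B := by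
  simp only [mem_filter, mem_powerset, IsAttack, sum_const, nsmul_eq_mul, mul_one]
  constructor
  · rintro ⟨hsub, hcl, hB⟩
    exact ⟨⟨fun h0 => (mem_filter.1 (hsub h0)).2 rfl, hcl⟩, hB⟩
  · rintro ⟨⟨h0, hcl⟩, hB⟩
    exact ⟨fun v hv => mem_filter.2 ⟨mem_univ v, fun h => h0 (h ▸ hv)⟩, hcl, hB⟩

theorem sum_le_maxp {p : Fin (n+1) → ℚ} {B : ℚ} {A : Finset (Fin (n+1))}
    (hA : IsAttack par A) (hAB : (#A : ℚ) ≤ B) :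
    ∑ v ∈ A, p v ≤ maxp n par (fun _ => 1) p B := by
  unfold maxp
  have hmem := mem_image_of_mem (fun A => ∑ v ∈ A, p v) (mem_maxp_attacks_iff.2 ⟨hA, hAB⟩)
  obtain ⟨b, hb⟩ := Finset.max_of_mem hmem
  rw [hb, WithBot.unbotD_coe]
  exact le_max_of_eq hmem hb

theorem maxp_le {p : Fin (n+1) → ℚ} {B t : ℚ} (ht : 0 ≤ t)
    (h : ∀ A, IsAttack par A → (#A : ℚ) ≤ B → ∑ v ∈ A, p v ≤ t) :
    maxp n par (fun _ => 1) p B ≤ t := by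
  unfold maxp
  rcases hmax : Finset.max _ with _ | b
  · exact ht
  · obtain ⟨A, hA, rfl⟩ := mem_image.1 (mem_of_max hmax)
    exact h A (mem_maxp_attacks_iff.1 hA).1 (mem_maxp_attacks_iff.1 hA).2

theorem maxp_nonneg (p : Fin (n+1) → ℚ) {B : ℚ} (hB : 0 ≤ B) :
    0 ≤ maxp n par (fun _ => 1) p B := by
  simpa using sum_le_maxp (p := p) (A := ∅) ⟨notMem_empty 0, by simp⟩ (by simpa using hB)

theorem maxp_le_maxp {p q : Fin (n+1) → ℚ} {B : ℚ} (hB : 0 ≤ B)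
    (h : ∀ A, IsAttack par A →
      ∃ A', IsAttack par A' ∧ #A' ≤ #A ∧ ∑ v ∈ A, q v ≤ ∑ v ∈ A', p v) :
    maxp n par (fun _ => 1) q B ≤ maxp n par (fun _ => 1) p B := by
  refine maxp_le (maxp_nonneg p hB) fun A hA hAB => ?_
  obtain ⟨A', hA', hcard, hsum⟩ := h A hA
  exact hsum.trans (sum_le_maxp hA' (le_trans (by exact_mod_cast hcard) hAB))

theorem maxp_congr {c p q : Fin (n+1) → ℚ} {B : ℚ} (h : ∀ v, v ≠ 0 → p v = q v) :
    maxp n par c p B = maxp n par c q B := by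
  unfold maxp
  congr 2
  refine image_congr fun A hA => sum_congr rfl fun v hv => h v ?_
  have hsub := mem_powerset.1 (mem_filter.1 hA).1 hv
  exact (mem_filter.1 hsub).2

theorem IsAttack.map_of_comm {A : Finset (Fin (n+1))} (hA : IsAttack par A)
    {e : Perm (Fin (n+1))} (he0 : e 0 = 0) (he : ∀ v, par (e v) = e (par v)) :
    IsAttack par (A.map e.toEmbedding) := by
  refine ⟨fun h => hA.1 ?_, forall_mem_map.2 fun v hv => ?_⟩
  · rwa [mem_map_equiv, e.symm_apply_eq.2 he0.symm] at h
  · rw [Equiv.coe_toEmbedding, he]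
    rcases hA.2 v hv with h | h
    · exact Or.inl (by rw [h, he0])
    · exact Or.inr (mem_map_of_mem _ h)

theorem maxp_comp_le_of_comm {p : Fin (n+1) → ℚ} {B : ℚ} (hB : 0 ≤ B) {e : Perm (Fin (n+1))}
    (he0 : e 0 = 0) (he : ∀ v, par (e v) = e (par v)) :
    maxp n par (fun _ => 1) (p ∘ e) B ≤ maxp n par (fun _ => 1) p B :=
  maxp_le_maxp hB fun A hA =>
    ⟨A.map e.toEmbedding, hA.map_of_comm he0 he, (card_map _).le, (sum_map A _ p).ge⟩

theorem IsAttack.map_swap {A : Finset (Fin (n+1))} (hA : IsAttack par A) {x y : Fin (n+1)}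
    (hx0 : x ≠ 0) (hy0 : y ≠ 0) (hxA : x ∉ A) (hpx : par x = 0) (hy : ∀ v ∈ A, par v ≠ y) :
    IsAttack par (A.map (swap x y).toEmbedding) := by
  refine ⟨fun h => hA.1 ?_, forall_mem_map.2 fun v hv => ?_⟩
  · rwa [mem_map_equiv, symm_swap, swap_apply_of_ne_of_ne hx0.symm hy0.symm] at h
  rw [Equiv.coe_toEmbedding]
  have hvx : v ≠ x := fun h => hxA (h ▸ hv)
  rcases eq_or_ne v y with rfl | hvy
  · exact Or.inl (by rw [swap_apply_right, hpx])
  rw [swap_apply_of_ne_of_ne hvx hvy]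
  refine (hA.2 v hv).imp_right fun hpv => ?_
  have hpvx : par v ≠ x := fun h => hxA (h ▸ hpv)
  rw [mem_map_equiv, symm_swap, swap_apply_of_ne_of_ne hpvx (hy v hv)]
  exact hpv

theorem maxp_comp_swap_le {p : Fin (n+1) → ℚ} {B : ℚ} (hB : 0 ≤ B) {x y : Fin (n+1)}
    (hp : p y ≤ p x)
    (h : ∀ A, IsAttack par A → y ∈ A → x ∉ A →
      ∃ A', IsAttack par A' ∧ #A' ≤ #A ∧ ∑ v ∈ A, p (swap x y v) ≤ ∑ v ∈ A', p v) :
    maxp n par (fun _ => 1) (p ∘ swap x y) B ≤ maxp n par (fun _ => 1) p B := by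
  refine maxp_le_maxp hB fun A hA => ?_
  by_cases hxA : x ∈ A <;> by_cases hyA : y ∈ A
  · exact ⟨A, hA, le_rfl, (sum_comp_swap_of_mem_of_mem p hxA hyA).le⟩
  · refine ⟨A, hA, le_rfl, ?_⟩
    simp only [Function.comp_apply]
    rw [sum_comp_swap_of_mem_of_notMem p hxA hyA]
    linarith
  · exact h A hA hyA hxA
  · exact ⟨A, hA, le_rfl, (sum_comp_swap_of_notMem_of_notMem p hxA hyA).le⟩

theorem exists_attack_map_swap {p : Fin (n+1) → ℚ} {A : Finset (Fin (n+1))}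
    (hA : IsAttack par A) {x y : Fin (n+1)} (hx0 : x ≠ 0) (hy0 : y ≠ 0) (hxA : x ∉ A)
    (hpx : par x = 0) (hy : ∀ v ∈ A, par v ≠ y) :
    ∃ A', IsAttack par A' ∧ #A' ≤ #A ∧ ∑ v ∈ A, p (swap x y v) ≤ ∑ v ∈ A', p v :=
  ⟨_, hA.map_swap hx0 hy0 hxA hpx hy, (card_map _).le, (sum_map A _ p).ge⟩

theorem maxp_comp_swap_le_of_childless {p : Fin (n+1) → ℚ} {B : ℚ} (hB : 0 ≤ B)
    {x y : Fin (n+1)} (hx0 : x ≠ 0) (hy0 : y ≠ 0) (hpx : par x = 0) (hy : ∀ v, par v ≠ y)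
    (hp : p y ≤ p x) :
    maxp n par (fun _ => 1) (p ∘ swap x y) B ≤ maxp n par (fun _ => 1) p B :=
  maxp_comp_swap_le hB hp fun _ hA _ hxA =>
    exists_attack_map_swap hA hx0 hy0 hxA hpx fun v _ => hy v

end Tree

section Spider

variable {n k : ℕ}

theorem spiderPar_of_le {v : Fin (n+1)} (hv : v.val ≤ k) : spiderPar n k v = 0 := dif_pos hv

theorem spiderPar_eq_iff {u v : Fin (n+1)} (hu : u ≠ 0) :
    spiderPar n k v = u ↔ v.val = u.val + k := by
  have hu' : u.val ≠ 0 := Fin.val_ne_iff.2 hu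
  unfold spiderPar
  split_ifs with hv
  · exact ⟨fun h => absurd h.symm hu, fun h => by omega⟩
  · rw [Fin.ext_iff]
    dsimp only
    omega

theorem spiderPar_ne_of_sub_lt {u : Fin (n+1)} (hu : n - k < u.val) (v : Fin (n+1)) :
    spiderPar n k v ≠ u := by
  have hu0 : u ≠ 0 := by
    rintro rfl
    simp at hu
  rw [Ne, spiderPar_eq_iff hu0]
  have := v.isLt
  omega

structure IsBranchPair (n k : ℕ) (x y lx ly : Fin (n+1)) : Prop where
  one_le : 1 ≤ x.val
  lt : x.val < y.val
  le_sub : y.val ≤ n - k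
  leaf_left : lx.val = x.val + k
  leaf_right : ly.val = y.val + k

namespace IsBranchPair

variable {x y lx ly : Fin (n+1)}

theorem ne_zero (hb : IsBranchPair n k x y lx ly) : x ≠ 0 ∧ y ≠ 0 ∧ lx ≠ 0 ∧ ly ≠ 0 := by
  obtain ⟨h1, h2, -, h4, h5⟩ := hb
  refine ⟨?_, ?_, ?_, ?_⟩ <;> exact Fin.ne_of_val_ne (by rw [Fin.val_zero]; omega)

theorem roots_ne_leaves (hnk : n ≤ 2 * k) (hb : IsBranchPair n k x y lx ly) :
    x ≠ lx ∧ x ≠ ly ∧ y ≠ lx ∧ y ≠ ly := by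
  obtain ⟨h1, h2, h3, h4, h5⟩ := hb
  refine ⟨?_, ?_, ?_, ?_⟩ <;> exact Fin.ne_of_val_ne (by omega)

theorem spiderPar_roots (hnk : n ≤ 2 * k) (hb : IsBranchPair n k x y lx ly) :
    spiderPar n k x = 0 ∧ spiderPar n k y = 0 := by
  have ⟨_, h2, h3, _, _⟩ := hb
  exact ⟨spiderPar_of_le (by omega), spiderPar_of_le (by omega)⟩

theorem spiderPar_leaf_left (hb : IsBranchPair n k x y lx ly) : spiderPar n k lx = x :=
  (spiderPar_eq_iff hb.ne_zero.1).2 hb.leaf_left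

theorem spiderPar_leaf_right (hb : IsBranchPair n k x y lx ly) : spiderPar n k ly = y :=
  (spiderPar_eq_iff hb.ne_zero.2.1).2 hb.leaf_right

theorem eq_leaf_left_of_spiderPar_eq (hb : IsBranchPair n k x y lx ly) {v : Fin (n+1)}
    (hv : spiderPar n k v = x) : v = lx :=
  Fin.ext (by rw [(spiderPar_eq_iff hb.ne_zero.1).1 hv, hb.leaf_left])

theorem eq_leaf_right_of_spiderPar_eq (hb : IsBranchPair n k x y lx ly) {v : Fin (n+1)}
    (hv : spiderPar n k v = y) : v = ly :=
  Fin.ext (by rw [(spiderPar_eq_iff hb.ne_zero.2.1).1 hv, hb.leaf_right])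

theorem swap_mul_swap_zero (hb : IsBranchPair n k x y lx ly) : (swap lx ly * swap x y) 0 = 0 := by
  obtain ⟨hx0, hy0, hlx0, hly0⟩ := hb.ne_zero
  rw [Perm.coe_mul, Function.comp_apply, swap_apply_of_ne_of_ne hx0.symm hy0.symm,
    swap_apply_of_ne_of_ne hlx0.symm hly0.symm]

theorem spiderPar_comm (hnk : n ≤ 2 * k) (hb : IsBranchPair n k x y lx ly) (v : Fin (n+1)) :
    spiderPar n k ((swap lx ly * swap x y) v) = (swap lx ly * swap x y) (spiderPar n k v) := by
  obtain ⟨hx0, hy0, hlx0, hly0⟩ := hb.ne_zero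
  obtain ⟨hxlx, hxly, hylx, hyly⟩ := hb.roots_ne_leaves hnk
  have hfix {u : Fin (n+1)} (hx : u ≠ x) (hy : u ≠ y) (hlx : u ≠ lx) (hly : u ≠ ly) :
      swap lx ly (swap x y u) = u := by
    rw [swap_apply_of_ne_of_ne hx hy, swap_apply_of_ne_of_ne hlx hly]
  have hσ0 := hfix hx0.symm hy0.symm hlx0.symm hly0.symm
  obtain ⟨hpx, hpy⟩ := hb.spiderPar_roots hnk
  simp only [Perm.coe_mul, Function.comp_apply]
  rcases eq_or_ne v x with rfl | hvx
  · rw [swap_apply_left, swap_apply_of_ne_of_ne hylx hyly, hpx, hpy, hσ0]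
  rcases eq_or_ne v y with rfl | hvy
  · rw [swap_apply_right, swap_apply_of_ne_of_ne hxlx hxly, hpx, hpy, hσ0]
  rcases eq_or_ne v lx with rfl | hvlx
  · rw [swap_apply_of_ne_of_ne hxlx.symm hylx.symm, swap_apply_left, hb.spiderPar_leaf_left,
      hb.spiderPar_leaf_right, swap_apply_left, swap_apply_of_ne_of_ne hylx hyly]
  rcases eq_or_ne v ly with rfl | hvly
  · rw [swap_apply_of_ne_of_ne hxly.symm hyly.symm, swap_apply_right, hb.spiderPar_leaf_left,
      hb.spiderPar_leaf_right, swap_apply_right, swap_apply_of_ne_of_ne hxlx hxly]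
  rw [hfix hvx hvy hvlx hvly]
  rcases eq_or_ne (spiderPar n k v) 0 with h0 | -
  · rw [h0, hσ0]
  have ⟨h1, _, h3, h4, h5⟩ := hb
  refine (hfix (fun h => hvlx (hb.eq_leaf_left_of_spiderPar_eq h))
    (fun h => hvly (hb.eq_leaf_right_of_spiderPar_eq h)) (spiderPar_ne_of_sub_lt (by omega) v)
    (spiderPar_ne_of_sub_lt (by omega) v)).symm

theorem maxp_comp_swap_roots_le (hnk : n ≤ 2 * k) (hb : IsBranchPair n k x y lx ly)
    {p : Fin (n+1) → ℚ} {B : ℚ} (hB : 0 ≤ B) (hp : p y ≤ p x) (hl : p ly ≤ p lx) :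
    maxp n (spiderPar n k) (fun _ => 1) (p ∘ swap x y) B ≤
      maxp n (spiderPar n k) (fun _ => 1) p B := by
  obtain ⟨hx0, hy0, hlx0, hly0⟩ := hb.ne_zero
  obtain ⟨hxlx, hxly, hylx, hyly⟩ := hb.roots_ne_leaves hnk
  have hpx := (hb.spiderPar_roots hnk).1
  refine maxp_comp_swap_le hB hp fun A hA hyA hxA => ?_
  by_cases hlyA : ly ∈ A
  swap
  · exact exists_attack_map_swap hA hx0 hy0 hxA hpx fun v hv h =>
      hlyA (hb.eq_leaf_right_of_spiderPar_eq h ▸ hv)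
  -- the whole branch of `y` is attacked: move it onto the branch of `x`
  have hlxA : lx ∉ A := fun h => (hA.2 lx h).elim
    (fun h0 => hx0 (hb.spiderPar_leaf_left ▸ h0)) (fun h1 => hxA (hb.spiderPar_leaf_left ▸ h1))
  refine ⟨A.map (swap lx ly * swap x y).toEmbedding,
    hA.map_of_comm hb.swap_mul_swap_zero (hb.spiderPar_comm hnk), (card_map _).le, ?_⟩
  rw [sum_map]
  simp only [Equiv.coe_toEmbedding, Perm.coe_mul, Function.comp_apply]
  rw [swap_comm x y, sum_comp_swap_of_mem_of_notMem p hyA hxA,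
    sum_comp_swap_of_mem_of_notMem (fun u => p (swap lx ly u)) hyA hxA, swap_comm lx ly,
    sum_comp_swap_of_mem_of_notMem p hlyA hlxA, swap_apply_of_ne_of_ne hyly hylx,
    swap_apply_of_ne_of_ne hxly hxlx]
  linarith

theorem maxp_comp_swap_leaves_le (hnk : n ≤ 2 * k) (hb : IsBranchPair n k x y lx ly)
    {p : Fin (n+1) → ℚ} {B : ℚ} (hB : 0 ≤ B) (hp : p x ≤ p y) (hl : p lx ≤ p ly) :
    maxp n (spiderPar n k) (fun _ => 1) (p ∘ swap lx ly) B ≤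
      maxp n (spiderPar n k) (fun _ => 1) p B := by
  obtain ⟨hxlx, hxly, hylx, hyly⟩ := hb.roots_ne_leaves hnk
  -- exchanging the leaves is exchanging the roots after exchanging the whole branches
  have hcomp : p ∘ swap lx ly = (p ∘ ⇑(swap lx ly * swap x y)) ∘ swap x y := by
    rw [Function.comp_assoc, ← Perm.coe_mul, mul_assoc, swap_mul_self, mul_one]
  rw [hcomp]
  refine (hb.maxp_comp_swap_roots_le hnk hB ?_ ?_).trans
    (maxp_comp_le_of_comm hB hb.swap_mul_swap_zero (hb.spiderPar_comm hnk))
  · simpa only [Function.comp_apply, Perm.coe_mul, swap_apply_left, swap_apply_right,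
      swap_apply_of_ne_of_ne hxlx hxly, swap_apply_of_ne_of_ne hylx hyly] using hp
  · simpa only [Function.comp_apply, Perm.coe_mul, swap_apply_left, swap_apply_right,
      swap_apply_of_ne_of_ne hxlx.symm hylx.symm, swap_apply_of_ne_of_ne hxly.symm hyly.symm]
      using hl

end IsBranchPair

def spiderRank (n k : ℕ) (v : Fin (n+1)) : Fin (n+1) :=
  if h : v.val ≤ k then v else ⟨n + k + 1 - v.val, by have := v.isLt; omega⟩

theorem spiderRank_val (v : Fin (n+1)) :
    (spiderRank n k v).val = if v.val ≤ k then v.val else n + k + 1 - v.val := by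
  unfold spiderRank
  split_ifs <;> rfl

theorem spiderRank_zero : spiderRank n k 0 = 0 := dif_pos (Nat.zero_le k)

theorem spiderRank_injective : Function.Injective (spiderRank n k) := by
  intro v w h
  have hvw := congrArg Fin.val h
  have := v.isLt
  have := w.isLt
  rw [spiderRank_val, spiderRank_val] at hvw
  ext
  split_ifs at hvw <;> omega

theorem spiderPrize_eq_comp (pr : Fin (n+1) → ℚ) : spiderPrize n k pr = pr ∘ spiderRank n k := by
  funext v
  rw [Function.comp_apply]
  unfold spiderPrize spiderRank
  split_ifs <;> rfl

def spiderPotential (n k : ℕ) (q : Fin (n+1) → ℚ) : ℚ :=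
  ∑ v ∈ univ.filter (fun v : Fin (n+1) => v ≠ 0), ((spiderRank n k v : ℕ) : ℚ) * q v

theorem spiderPotential_lt_comp_swap {q : Fin (n+1) → ℚ} {x y : Fin (n+1)} (hx : x ≠ 0)
    (hy : y ≠ 0) (hr : spiderRank n k x < spiderRank n k y) (hq : q y < q x) :
    spiderPotential n k q < spiderPotential n k (q ∘ swap x y) := by
  have hxy : x ≠ y := by
    rintro rfl
    exact lt_irrefl _ hr
  have hr' : ((spiderRank n k x : ℕ) : ℚ) < (spiderRank n k y : ℕ) := by exact_mod_cast hr
  unfold spiderPotential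
  rw [Function.comp_def, sum_mul_comp_swap _ q (by simpa using hx) (by simpa using hy) hxy]
  nlinarith

theorem finite_image_spiderPotential (p : Fin (n+1) → ℚ) :
    (spiderPotential n k '' {q | valsNR n q = valsNR n p}).Finite := by
  refine (Set.finite_range fun g : Fin (n+1) → Fin (n+1) => spiderPotential n k (p ∘ g)).subset ?_
  rintro _ ⟨q, hq, rfl⟩
  have hval : ∀ v, ∃ w, v ≠ 0 → p w = q v := by
    intro v
    by_cases hv : v = 0
    · exact ⟨0, fun h => absurd hv h⟩
    have hq' : valsNR n q = valsNR n p := hq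
    have hmem : q v ∈ valsNR n p := hq' ▸ Multiset.mem_map_of_mem q (by simpa using hv)
    obtain ⟨w, -, hw⟩ := Multiset.mem_map.1 hmem
    exact ⟨w, fun _ => hw⟩
  choose g hg using hval
  exact ⟨g, sum_congr rfl fun v hv => by rw [Function.comp_apply, hg v (mem_filter.1 hv).2]⟩

theorem valsNR_comp_perm (q : Fin (n+1) → ℚ) {e : Perm (Fin (n+1))} (he0 : e 0 = 0) :
    valsNR n (q ∘ e) = valsNR n q := by
  unfold valsNR
  rw [← Multiset.map_map]
  have hperm : (univ.filter fun v : Fin (n+1) => v ≠ 0).map e.toEmbedding =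
      univ.filter fun v => v ≠ 0 := by
    refine map_perm fun v hv => ?_
    simp only [coe_filter, mem_univ, true_and, Set.mem_ofPred_eq]
    rintro rfl
    exact hv he0
  exact congrArg (Multiset.map q) (congrArg Finset.val hperm)

theorem eqOn_spiderPrize_of_sorted {pr : Fin (n+1) → ℚ}
    (hsort : ∀ v w : Fin (n+1), v ≠ 0 → v ≤ w → pr v ≤ pr w) {q : Fin (n+1) → ℚ}
    (hq : valsNR n q = valsNR n (spiderPrize n k pr))
    (hsorted : ∀ v w, v ≠ 0 → w ≠ 0 → spiderRank n k v < spiderRank n k w → q v ≤ q w)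
    (v : Fin (n+1)) (hv : v ≠ 0) : spiderPrize n k pr v = q v := by
  refine eqOn_of_map_val_eq (spiderRank n k) _ spiderRank_injective.injOn hq.symm
    (fun x hx y _ hxy => ?_) (fun x hx y hy => hsorted x y (mem_filter.1 hx).2 (mem_filter.1 hy).2)
    (by simpa using hv)
  rw [spiderPrize_eq_comp]
  refine hsort _ _ (fun h => (mem_filter.1 hx).2 (spiderRank_injective (k := k) ?_)) hxy.le
  rw [h, spiderRank_zero]

def IsImprovement (n k : ℕ) (B : ℚ) (q : Fin (n+1) → ℚ) (e : Perm (Fin (n+1))) : Prop :=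
  e 0 = 0 ∧ spiderPotential n k q < spiderPotential n k (q ∘ e) ∧
    maxp n (spiderPar n k) (fun _ => 1) (q ∘ e) B ≤ maxp n (spiderPar n k) (fun _ => 1) q B

theorem IsBranchPair.exists_isImprovement (hnk : n ≤ 2 * k) {x y lx ly : Fin (n+1)}
    (hb : IsBranchPair n k x y lx ly) {q : Fin (n+1) → ℚ} {B : ℚ} (hB : 0 ≤ B)
    (hinv : q y < q x ∨ q lx < q ly) :
    ∃ e, IsImprovement n k B q e := by
  obtain ⟨hx0, hy0, hlx0, hly0⟩ := hb.ne_zero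
  obtain ⟨hxlx, hxly, hylx, hyly⟩ := hb.roots_ne_leaves hnk
  have ⟨h1, h2, h3, h4, h5⟩ := hb
  have := ly.isLt
  have hrxy : spiderRank n k x < spiderRank n k y := by
    rw [Fin.lt_def, spiderRank_val, spiderRank_val, if_pos (by omega), if_pos (by omega)]
    omega
  have hrl : spiderRank n k ly < spiderRank n k lx := by
    rw [Fin.lt_def, spiderRank_val, spiderRank_val, if_neg (by omega), if_neg (by omega)]
    omega
  have hswap_roots := swap_apply_of_ne_of_ne hx0.symm hy0.symm
  have hswap_leaves := swap_apply_of_ne_of_ne hlx0.symm hly0.symm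
  by_cases hr : q y < q x
  · by_cases hl : q ly ≤ q lx
    · exact ⟨swap x y, hswap_roots, spiderPotential_lt_comp_swap hx0 hy0 hrxy hr,
        hb.maxp_comp_swap_roots_le hnk hB hr.le hl⟩
    -- both pairs are inverted: exchange the two branches
    refine ⟨swap lx ly * swap x y, hb.swap_mul_swap_zero, ?_,
      maxp_comp_le_of_comm hB hb.swap_mul_swap_zero (hb.spiderPar_comm hnk)⟩
    have hleaves := spiderPotential_lt_comp_swap hly0 hlx0 hrl (not_le.1 hl)
    rw [swap_comm] at hleaves
    refine hleaves.trans (spiderPotential_lt_comp_swap hx0 hy0 hrxy ?_)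
    simpa only [Function.comp_apply, swap_apply_of_ne_of_ne hxlx hxly,
      swap_apply_of_ne_of_ne hylx hyly] using hr
  · have hl := hinv.resolve_left hr
    refine ⟨swap lx ly, hswap_leaves, ?_, hb.maxp_comp_swap_leaves_le hnk hB (not_lt.1 hr) hl.le⟩
    rw [swap_comm]
    exact spiderPotential_lt_comp_swap hly0 hlx0 hrl hl

theorem exists_isImprovement (hnk : n ≤ 2 * k) {q : Fin (n+1) → ℚ} {B : ℚ} (hB : 0 ≤ B)
    {v w : Fin (n+1)} (hv : v ≠ 0) (hw : w ≠ 0) (hr : spiderRank n k v < spiderRank n k w)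
    (hq : q w < q v) :
    ∃ e, IsImprovement n k B q e := by
  have hv1 : 1 ≤ v.val := Nat.one_le_iff_ne_zero.2 (Fin.val_ne_iff.2 hv)
  have hw1 : 1 ≤ w.val := Nat.one_le_iff_ne_zero.2 (Fin.val_ne_iff.2 hw)
  have := v.isLt
  have := w.isLt
  rw [Fin.lt_def, spiderRank_val, spiderRank_val] at hr
  by_cases hvk : v.val ≤ k
  · by_cases hw' : n - k < w.val
    · exact ⟨swap v w, swap_apply_of_ne_of_ne hv.symm hw.symm,
        spiderPotential_lt_comp_swap hv hw (by rwa [Fin.lt_def, spiderRank_val, spiderRank_val]) hq,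
        maxp_comp_swap_le_of_childless hB hv hw (spiderPar_of_le hvk) (spiderPar_ne_of_sub_lt hw')
          hq.le⟩
    · rw [if_pos hvk, if_pos (by omega)] at hr
      exact IsBranchPair.exists_isImprovement hnk (x := v) (y := w) (lx := ⟨v.val + k, by omega⟩)
        (ly := ⟨w.val + k, by omega⟩) ⟨hv1, hr, by omega, rfl, rfl⟩ hB (Or.inl hq)
  · have hwk : ¬ w.val ≤ k := fun hwk => by rw [if_neg hvk, if_pos hwk] at hr; omega
    rw [if_neg hvk, if_neg hwk] at hr
    exact IsBranchPair.exists_isImprovement hnk (x := ⟨w.val - k, by omega⟩)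
      (y := ⟨v.val - k, by omega⟩) (lx := w) (ly := v)
      (by constructor <;> dsimp only <;> omega) hB (Or.inr hq)

end Spider

end PModel

theorem stmt14_general (n k : ℕ) (hnk : n ≤ 2 * k)
    (pr : Fin (n+1) → ℚ)
    (hsort : ∀ v w : Fin (n+1), v ≠ 0 → v ≤ w → pr v ≤ pr w)
    (m : ℕ) (p' : Fin (n+1) → ℚ)
    (hp' : valsNR n p' = valsNR n (spiderPrize n k pr)) :
    maxp n (spiderPar n k) (fun _ => 1) (spiderPrize n k pr) m ≤
      maxp n (spiderPar n k) (fun _ => 1) p' m := by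
  open PModel in
  refine forall_of_exists_lt_imp (finite_image_spiderPotential (k := k) (spiderPrize n k pr))
    (Q := fun q => maxp n (spiderPar n k) (fun _ => 1) (spiderPrize n k pr) m ≤
      maxp n (spiderPar n k) (fun _ => 1) q m) (fun q hq hQ => ?_) p' hp'
  by_cases hinv : ∃ v w, v ≠ 0 ∧ w ≠ 0 ∧ spiderRank n k v < spiderRank n k w ∧ q w < q v
  · obtain ⟨v, w, hv, hw, hr, hlt⟩ := hinv
    obtain ⟨e, he0, hpot, hmaxp⟩ := exists_isImprovement hnk (Nat.cast_nonneg m) hv hw hr hlt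
    exact ⟨q ∘ e, (valsNR_comp_perm q he0).trans hq, hpot, fun h => h.trans hmaxp⟩
  · push Not at hinv
    exact absurd (maxp_congr (eqOn_spiderPrize_of_sorted hsort hq hinv)).le hQ

/-- On a rooted 4-spider, putting the `k` smallest prizes on level one in
increasing order and the largest prizes on the leaves in decreasing order
(so the largest leaf prize hangs below the smallest level-one prize) is an
optimal security system for the P-model. -/
theorem stmt14 (n k : ℕ) (hnk : n ≤ 2 * k) (hk : k + 2 ≤ n)
    (pr : Fin (n+1) → ℚ) (hpr : ∀ v, 0 ≤ pr v)
    (hsort : ∀ v w : Fin (n+1), v ≠ 0 → v ≤ w → pr v ≤ pr w)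
    (m : ℕ) (p' : Fin (n+1) → ℚ)
    (hp' : valsNR n p' = valsNR n (spiderPrize n k pr)) :
    maxp n (spiderPar n k) (fun _ => 1) (spiderPrize n k pr) m ≤
      maxp n (spiderPar n k) (fun _ => 1) p' m :=
  stmt14_general n k hnk pr hsort m p' hp'
end
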